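/- arXiv:1201.6046 — 5 statements merged into one kernel-verified Lean document; each statement's English description precedes it below -/
import Mathlib

section
/- Let f(X) = 1 - Σ_{n≥1} a_n X^{2n} with a_n > 0, Σ a_n = 1, so f is strictly decreasing on [0,1] with f(0)=1, f(1)=0. Let w be a probability measure on [0,1/2] with ∫ f(1-2ε) dw(ε) = φ₀ ∈ (0,1). Then γ_1(w) = ∫ (1-2ε)² dw(ε) ≤ (f⁻¹(φ₀))². -/
open MeasureTheory

lemma tangent_pow (n : ℕ) {s t : ℝ} (hs : 0 ≤ s) (ht : 0 ≤ t) :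
    s ^ (n + 1) + ((n : ℝ) + 1) * s ^ n * (t - s) ≤ t ^ (n + 1) := by
  have key : (∑ i ∈ Finset.range (n + 1), t ^ i * s ^ (n - i)) * (t - s)
      = t ^ (n + 1) - s ^ (n + 1) := by
    have := geom_sum₂_mul t s (n + 1)
    simpa using this
  rcases le_total s t with h | h
  · have hb : ∀ i ∈ Finset.range (n + 1), s ^ n ≤ t ^ i * s ^ (n - i) := by
      intro i hi
      have hi' : i ≤ n := Nat.lt_succ_iff.mp (Finset.mem_range.mp hi)
      calc s ^ n = s ^ i * s ^ (n - i) := by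
            rw [← pow_add, Nat.add_sub_cancel' hi']
        _ ≤ t ^ i * s ^ (n - i) :=
            mul_le_mul_of_nonneg_right (pow_le_pow_left₀ hs h i) (pow_nonneg hs _)
    have hsum : ((n : ℝ) + 1) * s ^ n ≤ ∑ i ∈ Finset.range (n + 1), t ^ i * s ^ (n - i) := by
      have := Finset.sum_le_sum hb
      simpa [Finset.sum_const, nsmul_eq_mul, add_comm] using this
    have := mul_le_mul_of_nonneg_right hsum (sub_nonneg.mpr h)
    rw [key] at this
    linarith
  · have hb : ∀ i ∈ Finset.range (n + 1), t ^ i * s ^ (n - i) ≤ s ^ n := by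
      intro i hi
      have hi' : i ≤ n := Nat.lt_succ_iff.mp (Finset.mem_range.mp hi)
      calc t ^ i * s ^ (n - i) ≤ s ^ i * s ^ (n - i) :=
            mul_le_mul_of_nonneg_right (pow_le_pow_left₀ ht h i) (pow_nonneg hs _)
        _ = s ^ n := by rw [← pow_add, Nat.add_sub_cancel' hi']
    have hsum : (∑ i ∈ Finset.range (n + 1), t ^ i * s ^ (n - i)) ≤ ((n : ℝ) + 1) * s ^ n := by
      have := Finset.sum_le_sum hb
      simpa [Finset.sum_const, nsmul_eq_mul, add_comm] using this
    have := mul_le_mul_of_nonpos_right hsum (sub_nonpos.mpr h)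
    rw [key] at this
    linarith

/-- Among channels with `Φ(a) = φ₀`, the BSC maximizes the first moment:
if `f(X) = 1 - ∑_{n≥1} aₙ X^{2n}` with `aₙ > 0`, `∑ aₙ = 1` (so `f` is strictly
decreasing on `[0,1]` with `f 0 = 1`, `f 1 = 0`), `w` is a probability measure on
`[0,1/2]` with `∫ f(1-2ε) dw = φ₀ ∈ (0,1)`, and `y ∈ [0,1]` satisfies `f y = φ₀`
(i.e. `y = f⁻¹(φ₀)`), then `γ₁(w) = ∫ (1-2ε)² dw ≤ y²`. -/
theorem first_moment_le_inv_sq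
    (a : ℕ → ℝ) (ha : ∀ n, 0 < a n) (hsum : HasSum a 1)
    (f : ℝ → ℝ) (hf : ∀ x : ℝ, f x = 1 - ∑' n : ℕ, a n * x ^ (2 * (n + 1)))
    (hmono : StrictAntiOn f (Set.Icc (0 : ℝ) 1)) (hf0 : f 0 = 1) (hf1 : f 1 = 0)
    (w : Measure ℝ) [IsProbabilityMeasure w]
    (hw : ∀ᵐ ε ∂w, ε ∈ Set.Icc (0 : ℝ) (1 / 2))
    (φ₀ : ℝ) (hφ₀ : φ₀ ∈ Set.Ioo (0 : ℝ) 1)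
    (hΦ : ∫ ε, f (1 - 2 * ε) ∂w = φ₀)
    (y : ℝ) (hy : y ∈ Set.Icc (0 : ℝ) 1) (hfy : f y = φ₀) :
    (∫ ε, (1 - 2 * ε) ^ 2 ∂w) ≤ y ^ 2 := by
  -- y < 1
  have hy1 : y < 1 := by
    rcases lt_or_eq_of_le hy.2 with h | h
    · exact h
    · exfalso; rw [h, hf1] at hfy; exact hφ₀.1.ne hfy
  set s : ℝ := y ^ 2 with hs_def
  have hs0 : 0 ≤ s := sq_nonneg y
  have hs1 : s < 1 := by
    have : |y| < 1 := abs_lt.mpr ⟨by linarith [hy.1], hy1⟩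
    calc s = |y| ^ 2 := by rw [sq_abs]
      _ < 1 := by nlinarith [abs_nonneg y]
  -- summability facts
  have hsa : Summable a := hsum.summable
  have ha1 : ∀ n, a n ≤ 1 := fun n => le_hasSum hsum n (fun m _ => (ha m).le)
  have hSgeom : Summable (fun n : ℕ => ((n : ℝ) + 1) * s ^ n) := by
    have hnorm : ‖s‖ < 1 := by rwa [Real.norm_eq_abs, abs_of_nonneg hs0]
    have h1 := summable_pow_mul_geometric_of_norm_lt_one 1 hnorm
    have h2 := summable_geometric_of_norm_lt_one hnorm
    have := h1.add h2
    convert this using 2 with n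
    · rfl
    ring
  have hS2 : Summable (fun n : ℕ => a n * ((n : ℝ) + 1) * s ^ n) := by
    apply Summable.of_nonneg_of_le
      (fun n => mul_nonneg (mul_nonneg (ha n).le (by positivity)) (pow_nonneg hs0 n)) _ hSgeom
    intro n
    have h1 : a n * ((n : ℝ) + 1) ≤ 1 * ((n : ℝ) + 1) :=
      mul_le_mul_of_nonneg_right (ha1 n) (by positivity)
    calc a n * ((n : ℝ) + 1) * s ^ n ≤ 1 * ((n : ℝ) + 1) * s ^ n :=
          mul_le_mul_of_nonneg_right h1 (pow_nonneg hs0 n)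
      _ = ((n : ℝ) + 1) * s ^ n := by ring
  have hSpow : ∀ t : ℝ, 0 ≤ t → t ≤ 1 → Summable (fun n : ℕ => a n * t ^ (n + 1)) := by
    intro t ht0 ht1
    apply Summable.of_nonneg_of_le (fun n => mul_nonneg (ha n).le (pow_nonneg ht0 _)) _ hsa
    intro n
    calc a n * t ^ (n + 1) ≤ a n * 1 :=
          mul_le_mul_of_nonneg_left (pow_le_one₀ ht0 ht1) (ha n).le
      _ = a n := mul_one _
  have hS1 : Summable (fun n : ℕ => a n * s ^ (n + 1)) := hSpow s hs0 hs1.le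
  set c : ℝ := ∑' n : ℕ, a n * ((n : ℝ) + 1) * s ^ n with hc_def
  have hc : 0 < c := by
    apply Summable.tsum_pos hS2
      (fun n => mul_nonneg (mul_nonneg (ha n).le (by positivity)) (pow_nonneg hs0 n)) 0
    simpa using ha 0
  -- key identity: ∑ aₙ s^{n+1} = 1 - φ₀
  have hkey : (∑' n : ℕ, a n * s ^ (n + 1)) = 1 - φ₀ := by
    have h1 : (∑' n : ℕ, a n * s ^ (n + 1)) = ∑' n : ℕ, a n * y ^ (2 * (n + 1)) :=
      tsum_congr fun n => by rw [hs_def, ← pow_mul]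
    have h2 := hf y
    rw [hfy] at h2
    linarith [h1, h2]
  -- integrability
  have hI1 : Integrable (fun ε => f (1 - 2 * ε)) w := by
    by_contra h
    rw [integral_undef h] at hΦ
    exact hφ₀.1.ne hΦ
  have hI2 : Integrable (fun ε => (1 - 2 * ε) ^ 2) w := by
    apply Integrable.mono' (integrable_const (1 : ℝ))
      ((by fun_prop : Continuous fun ε : ℝ => (1 - 2 * ε) ^ 2).aestronglyMeasurable)
    filter_upwards [hw] with ε hε
    rw [Real.norm_eq_abs, abs_of_nonneg (sq_nonneg _)]
    nlinarith [hε.1, hε.2]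
  have hI2' : Integrable (fun ε => (1 - 2 * ε) ^ 2 - s) w := hI2.sub (integrable_const s)
  have hI3 : Integrable (fun ε => φ₀ - c * ((1 - 2 * ε) ^ 2 - s)) w :=
    (integrable_const φ₀).sub (hI2'.const_mul c)
  -- pointwise a.e. bound
  have hae : ∀ᵐ ε ∂w, f (1 - 2 * ε) ≤ φ₀ - c * ((1 - 2 * ε) ^ 2 - s) := by
    filter_upwards [hw] with ε hε
    set t : ℝ := (1 - 2 * ε) ^ 2 with ht_def
    have hx0 : (0 : ℝ) ≤ 1 - 2 * ε := by linarith [hε.2]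
    have hx1 : 1 - 2 * ε ≤ 1 := by linarith [hε.1]
    have ht0 : 0 ≤ t := sq_nonneg _
    have ht1 : t ≤ 1 := by nlinarith
    have hft : f (1 - 2 * ε) = 1 - ∑' n : ℕ, a n * t ^ (n + 1) := by
      rw [hf]
      congr 1
      exact tsum_congr fun n => by rw [ht_def, ← pow_mul]
    have per : ∀ n : ℕ,
        a n * s ^ (n + 1) + (a n * ((n : ℝ) + 1) * s ^ n) * (t - s) ≤ a n * t ^ (n + 1) := by
      intro n
      have h := tangent_pow n hs0 ht0
      calc a n * s ^ (n + 1) + (a n * ((n : ℝ) + 1) * s ^ n) * (t - s)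
          = a n * (s ^ (n + 1) + ((n : ℝ) + 1) * s ^ n * (t - s)) := by ring
        _ ≤ a n * t ^ (n + 1) := mul_le_mul_of_nonneg_left h (ha n).le
    have hSL : Summable (fun n : ℕ =>
        a n * s ^ (n + 1) + (a n * ((n : ℝ) + 1) * s ^ n) * (t - s)) :=
      hS1.add (hS2.mul_right _)
    have htsum : (∑' n : ℕ, (a n * s ^ (n + 1) + (a n * ((n : ℝ) + 1) * s ^ n) * (t - s)))
        ≤ ∑' n : ℕ, a n * t ^ (n + 1) :=
      Summable.tsum_le_tsum per hSL (hSpow t ht0 ht1)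
    have hsplit : (∑' n : ℕ, (a n * s ^ (n + 1) + (a n * ((n : ℝ) + 1) * s ^ n) * (t - s)))
        = (1 - φ₀) + c * (t - s) := by
      rw [Summable.tsum_add hS1 (hS2.mul_right _), tsum_mul_right, hkey, hc_def]
    rw [hsplit] at htsum
    rw [hft]
    linarith
  -- integrate
  have hle := integral_mono_ae hI1 hI3 hae
  rw [hΦ] at hle
  rw [integral_sub (integrable_const φ₀) (hI2'.const_mul c), integral_const,
    integral_const_mul, integral_sub hI2 (integrable_const s), integral_const] at hle
  simp only [measure_univ, probReal_univ, ENNReal.toReal_one, one_smul, smul_eq_mul, one_mul] at hle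
  by_contra hcon
  push_neg at hcon
  nlinarith [mul_pos hc (sub_pos.mpr hcon)]
end

section
/- With f, w, φ₀ as above, if γ_1(w) = (f⁻¹(φ₀))² then w is the Dirac measure at ε₀ = (1 - f⁻¹(φ₀))/2, i.e., equality in the moment bound holds only for the BSC. -/
open MeasureTheory

/-- Tangent line inequality for `x ^ (n+1)` on `[0, ∞)`. -/
lemma tangent_term_nonneg (s t : ℝ) (hs : 0 < s) (ht : 0 ≤ t) (n : ℕ) :
    s ^ (n + 1) + ((n : ℝ) + 1) * s ^ n * (t - s) ≤ t ^ (n + 1) := by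
  have hs' : s ≠ 0 := hs.ne'
  have h1 : (-2 : ℝ) ≤ (t - s) / s := by
    rw [le_div_iff₀ hs]; nlinarith
  have h2 := one_add_mul_le_pow h1 (n + 1)
  have h3 := mul_le_mul_of_nonneg_right h2 (pow_nonneg hs.le (n + 1))
  have e1 : (1 + (t - s) / s) ^ (n + 1) * s ^ (n + 1) = t ^ (n + 1) := by
    rw [← mul_pow]; congr 1; field_simp; ring
  have e2 : (1 + ((n : ℝ) + 1) * ((t - s) / s)) * s ^ (n + 1)
      = s ^ (n + 1) + ((n : ℝ) + 1) * s ^ n * (t - s) := by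
    field_simp; ring
  push_cast at h3
  rw [e1] at h3
  linarith [h3, e2.ge, e2.le]

lemma summable_aux {a : ℕ → ℝ} (ha : ∀ n, 0 < a n) (ha1 : ∀ n, a n ≤ 1)
    {s : ℝ} (hs : 0 ≤ s) (hs1 : s < 1) :
    Summable (fun n : ℕ => a n * (((n : ℝ) + 1) * s ^ n)) := by
  have hg : Summable (fun n : ℕ => ((n : ℝ) + 1) * s ^ n) := by
    have h1 := summable_pow_mul_geometric_of_norm_lt_one (R := ℝ) 1
      (by rwa [Real.norm_eq_abs, abs_of_nonneg hs])
    have h0 := summable_geometric_of_lt_one hs hs1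
    exact (h1.add h0).congr (fun n => by push_cast; ring)
  apply Summable.of_nonneg_of_le
    (fun n => mul_nonneg (ha n).le (by positivity)) _ hg
  intro n
  have h0 : (0 : ℝ) ≤ ((n : ℝ) + 1) * s ^ n := by positivity
  calc a n * (((n : ℝ) + 1) * s ^ n) ≤ 1 * (((n : ℝ) + 1) * s ^ n) :=
        mul_le_mul_of_nonneg_right (ha1 n) h0
    _ = ((n : ℝ) + 1) * s ^ n := one_mul _

lemma core_ineq (a : ℕ → ℝ) (ha : ∀ n, 0 < a n) (ha1 : ∀ n, a n ≤ 1) (hsa : Summable a)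
    (s t : ℝ) (hs : 0 < s) (hs1 : s < 1) (ht : 0 ≤ t) (ht1 : t ≤ 1) :
    a 1 * (t - s) ^ 2 ≤
      (∑' n : ℕ, a n * t ^ (n + 1)) - (∑' n : ℕ, a n * s ^ (n + 1))
        - (∑' n : ℕ, a n * (((n : ℝ) + 1) * s ^ n)) * (t - s) := by
  have hpow : ∀ (u : ℝ), 0 ≤ u → u ≤ 1 → Summable (fun n : ℕ => a n * u ^ (n + 1)) := by
    intro u hu hu1
    apply Summable.of_nonneg_of_le
      (fun n => mul_nonneg (ha n).le (pow_nonneg hu _)) _ hsa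
    intro n
    calc a n * u ^ (n + 1) ≤ a n * 1 :=
          mul_le_mul_of_nonneg_left (pow_le_one₀ hu hu1) (ha n).le
      _ = a n := mul_one _
  have hst := hpow t ht ht1
  have hss := hpow s hs.le hs1.le
  have hsd := summable_aux ha ha1 hs.le hs1
  set c : ℕ → ℝ := fun n => a n * t ^ (n + 1) - a n * s ^ (n + 1)
      - a n * (((n : ℝ) + 1) * s ^ n) * (t - s) with hc
  have hsc : Summable c := (hst.sub hss).sub (hsd.mul_right (t - s))
  have htsum : ∑' n, c n =
      (∑' n : ℕ, a n * t ^ (n + 1)) - (∑' n : ℕ, a n * s ^ (n + 1))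
        - (∑' n : ℕ, a n * (((n : ℝ) + 1) * s ^ n)) * (t - s) := by
    rw [Summable.tsum_sub (hst.sub hss) (hsd.mul_right (t - s)), Summable.tsum_sub hst hss, tsum_mul_right]
  have hnn : ∀ n, 0 ≤ c n := by
    intro n
    have htan := tangent_term_nonneg s t hs ht n
    have : c n = a n * (t ^ (n + 1) - (s ^ (n + 1) + ((n : ℝ) + 1) * s ^ n * (t - s))) := by
      simp only [hc]; ring
    rw [this]
    exact mul_nonneg (ha n).le (by linarith)
  have h1 : c 1 ≤ ∑' n, c n := Summable.le_tsum hsc 1 (fun j _ => hnn j)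
  have hc1 : c 1 = a 1 * (t - s) ^ 2 := by
    simp only [hc]
    norm_num
    ring
  rw [← htsum]
  linarith [hc1 ▸ h1]

lemma eq_dirac_of_ae_eq {w : Measure ℝ} [IsProbabilityMeasure w] {c : ℝ}
    (h : ∀ᵐ x ∂w, x = c) : w = Measure.dirac c := by
  have h0 : w {x : ℝ | ¬ x = c} = 0 := ae_iff.1 h
  ext t ht
  rw [Measure.dirac_apply' _ ht]
  by_cases hc : c ∈ t
  · have hcompl : w tᶜ = 0 := by
      apply measure_mono_null _ h0
      intro x hx (hxc : x = c)
      exact hx (hxc ▸ hc)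
    rw [(prob_compl_eq_zero_iff ht).1 hcompl]
    simp [Set.indicator_of_mem hc]
  · have : w t = 0 := by
      apply measure_mono_null _ h0
      intro x hx (hxc : x = c)
      exact hc (hxc ▸ hx)
    rw [this]
    simp [Set.indicator_of_notMem hc]

/-- Equality case: with `f`, `w`, `φ₀` as in the moment bound, if
`γ₁(w) = (f⁻¹(φ₀))²` then `w` is the Dirac measure at `ε₀ = (1 - f⁻¹(φ₀))/2`,
i.e. `w` is the BSC. -/
theorem first_moment_eq_iff_bsc
    (a : ℕ → ℝ) (ha : ∀ n, 0 < a n) (hsum : HasSum a 1)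
    (f : ℝ → ℝ) (hf : ∀ x : ℝ, f x = 1 - ∑' n : ℕ, a n * x ^ (2 * (n + 1)))
    (w : Measure ℝ) [IsProbabilityMeasure w]
    (hw : ∀ᵐ ε ∂w, ε ∈ Set.Icc (0 : ℝ) (1 / 2))
    (φ₀ : ℝ) (hφ₀ : φ₀ ∈ Set.Ioo (0 : ℝ) 1)
    (hΦ : ∫ ε, f (1 - 2 * ε) ∂w = φ₀)
    (y : ℝ) (hy : y ∈ Set.Icc (0 : ℝ) 1) (hfy : f y = φ₀)
    (heq : (∫ ε, (1 - 2 * ε) ^ 2 ∂w) = y ^ 2) :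
    w = Measure.dirac ((1 - y) / 2) := by
  obtain ⟨hφpos, hφlt⟩ := hφ₀
  have htsum1 : ∑' n, a n = 1 := hsum.tsum_eq
  have ha1 : ∀ n, a n ≤ 1 := by
    intro n
    have := le_hasSum hsum n (fun j _ => (ha j).le)
    exact this
  -- y ∈ (0,1)
  have hy0 : 0 < y := by
    rcases lt_or_eq_of_le hy.1 with h | h
    · exact h
    · exfalso
      have : f 0 = 1 := by
        rw [hf 0]
        have : ∀ n : ℕ, a n * (0:ℝ) ^ (2 * (n + 1)) = 0 := by
          intro n; simp [pow_eq_zero_iff]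
        simp [this]
      rw [← h] at hfy
      rw [this] at hfy
      linarith
  have hy1 : y < 1 := by
    rcases lt_or_eq_of_le hy.2 with h | h
    · exact h
    · exfalso
      have : f 1 = 0 := by
        rw [hf 1]; simp [htsum1]
      rw [h, this] at hfy
      linarith
  set s : ℝ := y ^ 2 with hs_def
  have hs : 0 < s := by positivity
  have hs1 : s < 1 := by nlinarith
  set d : ℝ := ∑' n : ℕ, a n * (((n : ℝ) + 1) * s ^ n) with hd_def
  -- value of f at y in terms of s
  have hgs : ∑' n : ℕ, a n * s ^ (n + 1) = 1 - φ₀ := by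
    have h1 : ∑' n : ℕ, a n * s ^ (n + 1) = ∑' n : ℕ, a n * y ^ (2 * (n + 1)) :=
      tsum_congr (fun n => by rw [hs_def, pow_mul])
    have h2 := hf y
    rw [hfy] at h2
    linarith [h1, h2]
  -- integrability
  have hF_int : Integrable (fun ε => f (1 - 2 * ε)) w := by
    by_contra hni
    rw [integral_undef hni] at hΦ
    linarith
  have hT_int : Integrable (fun ε : ℝ => (1 - 2 * ε) ^ 2) w := by
    apply Integrable.mono' (integrable_const (1 : ℝ))
    · exact (((continuous_const.sub
        (continuous_const.mul continuous_id)).pow 2).aestronglyMeasurable)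
    · filter_upwards [hw] with ε hε
      obtain ⟨h1, h2⟩ := hε
      rw [Real.norm_eq_abs, abs_of_nonneg (by positivity)]
      nlinarith
  have hTs_int : Integrable (fun ε : ℝ => (1 - 2 * ε) ^ 2 - s) w :=
    hT_int.sub (integrable_const s)
  have hdT_int : Integrable (fun ε : ℝ => d * ((1 - 2 * ε) ^ 2 - s)) w :=
    hTs_int.const_mul d
  set H : ℝ → ℝ := fun ε => φ₀ - f (1 - 2 * ε) - d * ((1 - 2 * ε) ^ 2 - s) with hH_def
  have hA : Integrable (fun ε : ℝ => φ₀ - f (1 - 2 * ε)) w :=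
    (integrable_const φ₀).sub hF_int
  have hH_int : Integrable H w := hA.sub hdT_int
  have iTs : ∫ ε, ((1 - 2 * ε) ^ 2 - s) ∂w = 0 := by
    rw [integral_sub hT_int (integrable_const s), heq, integral_const]
    simp
  have iA : ∫ ε, (φ₀ - f (1 - 2 * ε)) ∂w = 0 := by
    rw [integral_sub (integrable_const φ₀) hF_int, hΦ, integral_const]
    simp
  have hH_integral : ∫ ε, H ε ∂w = 0 := by
    have : ∫ ε, H ε ∂w
        = (∫ ε, (φ₀ - f (1 - 2 * ε)) ∂w) - ∫ ε, d * ((1 - 2 * ε) ^ 2 - s) ∂w :=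
      integral_sub hA hdT_int
    rw [this, iA, integral_const_mul, iTs, mul_zero, sub_zero]
  set φfun : ℝ → ℝ := fun ε => a 1 * ((1 - 2 * ε) ^ 2 - s) ^ 2 with hφ_def
  have hφ_int : Integrable φfun w := by
    apply Integrable.mono' (integrable_const (a 1))
    · exact ((continuous_const.mul
        ((((continuous_const.sub (continuous_const.mul continuous_id)).pow 2).sub
          continuous_const).pow 2)).aestronglyMeasurable)
    · filter_upwards [hw] with ε hε
      obtain ⟨h1, h2⟩ := hε
      have ht0 : (0:ℝ) ≤ (1 - 2 * ε) ^ 2 := by positivity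
      have ht1 : (1 - 2 * ε) ^ 2 ≤ 1 := by nlinarith
      have hX : ((1 - 2 * ε) ^ 2 - s) ^ 2 ≤ 1 := by nlinarith
      simp only [hφ_def]
      rw [Real.norm_eq_abs, abs_of_nonneg (mul_nonneg (ha 1).le (sq_nonneg _))]
      nlinarith [(ha 1).le]
  have hae_le : ∀ᵐ ε ∂w, φfun ε ≤ H ε := by
    filter_upwards [hw] with ε hε
    obtain ⟨h1, h2⟩ := hε
    have ht0 : (0:ℝ) ≤ (1 - 2 * ε) ^ 2 := by positivity
    have ht1 : (1 - 2 * ε) ^ 2 ≤ 1 := by nlinarith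
    have hcore := core_ineq a ha ha1 hsum.summable s ((1 - 2 * ε) ^ 2) hs hs1 ht0 ht1
    have hfe : f (1 - 2 * ε) = 1 - ∑' n : ℕ, a n * ((1 - 2 * ε) ^ 2) ^ (n + 1) := by
      rw [hf (1 - 2 * ε)]
      congr 1
      exact tsum_congr (fun n => by rw [pow_mul])
    simp only [hH_def, hφ_def, hfe]
    rw [← hd_def] at hcore
    rw [hgs] at hcore
    linarith
  have hint_le : ∫ ε, φfun ε ∂w ≤ 0 := by
    rw [← hH_integral]
    exact integral_mono_ae hφ_int hH_int hae_le
  have hint_ge : 0 ≤ ∫ ε, φfun ε ∂w :=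
    integral_nonneg (fun ε => mul_nonneg (ha 1).le (sq_nonneg _))
  have hzero : ∫ ε, φfun ε ∂w = 0 := le_antisymm hint_le hint_ge
  have hae0 : ∀ᵐ ε ∂w, φfun ε = 0 := by
    have := (integral_eq_zero_iff_of_nonneg_ae
      (Filter.Eventually.of_forall (fun ε => mul_nonneg (ha 1).le (sq_nonneg _))) hφ_int).1 hzero
    filter_upwards [this] with ε hε
    exact hε
  have hconst : ∀ᵐ ε ∂w, ε = (1 - y) / 2 := by
    filter_upwards [hae0, hw] with ε h0 hε
    obtain ⟨h1, h2⟩ := hε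
    have ha1pos := ha 1
    have hsq : ((1 - 2 * ε) ^ 2 - s) ^ 2 = 0 := by
      by_contra hne
      have : 0 < ((1 - 2 * ε) ^ 2 - s) ^ 2 :=
        lt_of_le_of_ne (sq_nonneg _) (Ne.symm hne)
      simp only [hφ_def] at h0
      nlinarith
    have hteq : (1 - 2 * ε) ^ 2 = s := by
      have := pow_eq_zero_iff (n := 2) (by norm_num) |>.1 hsq
      linarith
    have hfac : (1 - 2 * ε - y) * (1 - 2 * ε + y) = 0 := by
      rw [hs_def] at hteq
      linear_combination hteq
    rcases mul_eq_zero.1 hfac with h | h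
    · linarith
    · linarith
  exact eq_dirac_of_ae_eq hconst
end

section
/- Let a_n > 0 with Σ_{n≥1} a_n = 1, let f(X) = 1 - Σ a_n X^{2n}, let ρ be a polynomial with ρ(0)=0 that is nondecreasing on [0, (f⁻¹(φ₀))²], and let w be a probability measure on [0,1/2] with ∫ f(1-2ε)dw(ε) = φ₀ ∈ (0,1). Then ρ(1) - Σ_{n≥1} a_n ρ(γ_n(w)) ≥ ρ(1) - ρ((f⁻¹(φ₀))²), where γ_n(w) = ∫(1-2ε)^{2n} dw(ε). -/
open MeasureTheory

/-- Lower bound (Lemma 3): if `aₙ > 0` with `∑ aₙ = 1`, `f(X) = 1 - ∑ aₙ X^{2n}`,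
`ρ` is a polynomial with `ρ(0) = 0` nondecreasing on `[0, (f⁻¹(φ₀))²]`, and `w`
is a probability measure on `[0,1/2]` with `∫ f(1-2ε) dw = φ₀ ∈ (0,1)`, then
`ρ(1) - ∑_{n≥1} aₙ ρ(γₙ(w)) ≥ ρ(1) - ρ((f⁻¹(φ₀))²)`. Here `y = f⁻¹(φ₀)`. -/
theorem lower_bound_fixed_entropy
    (a : ℕ → ℝ) (ha : ∀ n, 0 < a n) (hsum : HasSum a 1)
    (f : ℝ → ℝ) (hf : ∀ x : ℝ, f x = 1 - ∑' n : ℕ, a n * x ^ (2 * (n + 1)))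
    (φ₀ : ℝ) (hφ₀ : φ₀ ∈ Set.Ioo (0 : ℝ) 1)
    (y : ℝ) (hy : y ∈ Set.Icc (0 : ℝ) 1) (hfy : f y = φ₀)
    (ρ : Polynomial ℝ) (hρ0 : ρ.eval 0 = 0)
    (hmono : MonotoneOn ρ.eval (Set.Icc (0 : ℝ) (y ^ 2)))
    (w : Measure ℝ) [IsProbabilityMeasure w]
    (hw : ∀ᵐ ε ∂w, ε ∈ Set.Icc (0 : ℝ) (1 / 2))
    (hΦ : ∫ ε, f (1 - 2 * ε) ∂w = φ₀) :
    ρ.eval 1 - ρ.eval (y ^ 2)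
      ≤ ρ.eval 1 - ∑' n : ℕ, a n * ρ.eval (∫ ε, (1 - 2 * ε) ^ (2 * (n + 1)) ∂w) := by
  have hanneg : ∀ n, 0 ≤ a n := fun n => (ha n).le
  -- a.e. bounds on 1 - 2ε
  have hbound : ∀ᵐ ε ∂w, 0 ≤ 1 - 2 * ε ∧ 1 - 2 * ε ≤ 1 := by
    filter_upwards [hw] with ε hε
    constructor <;> [linarith [hε.2]; linarith [hε.1]]
  -- integrability of the moment integrands
  have hint : ∀ n : ℕ, Integrable (fun ε => (1 - 2 * ε) ^ (2 * (n + 1))) w := by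
    intro n
    refine Integrable.mono' (integrable_const 1)
      ((Continuous.pow (by continuity) _).aestronglyMeasurable) ?_
    filter_upwards [hbound] with ε hε
    rw [Real.norm_eq_abs, abs_pow, abs_of_nonneg hε.1]
    exact pow_le_one₀ hε.1 hε.2
  set γ : ℕ → ℝ := fun n => ∫ ε, (1 - 2 * ε) ^ (2 * (n + 1)) ∂w with hγ
  have hγnonneg : ∀ n, 0 ≤ γ n := by
    intro n
    refine integral_nonneg fun ε => ?_
    rw [pow_mul]
    exact pow_nonneg (sq_nonneg _) _
  have hγle0 : ∀ n, γ n ≤ γ 0 := by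
    intro n
    refine integral_mono_ae (hint n) (hint 0) ?_
    filter_upwards [hbound] with ε hε
    exact pow_le_pow_of_le_one hε.1 hε.2 (by omega)
  have hγle1 : ∀ n, γ n ≤ 1 := by
    intro n
    calc γ n ≤ ∫ _, (1 : ℝ) ∂w := by
          refine integral_mono_ae (hint n) (integrable_const 1) ?_
          filter_upwards [hbound] with ε hε
          exact pow_le_one₀ hε.1 hε.2
      _ = 1 := by simp
  -- summability of n ↦ aₙ γₙ
  have hsummγ : Summable fun n => a n * γ n :=
    Summable.of_nonneg_of_le (fun n => mul_nonneg (hanneg n) (hγnonneg n))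
      (fun n => mul_le_of_le_one_right (hanneg n) (hγle1 n)) hsum.summable
  -- f (1-2ε) is integrable (else its integral would be 0 ≠ φ₀)
  have hintf : Integrable (fun ε => f (1 - 2 * ε)) w := by
    by_contra h
    rw [integral_undef h] at hΦ
    exact hφ₀.1.ne hΦ
  have hintg : Integrable (fun ε => 1 - f (1 - 2 * ε)) w := (integrable_const 1).sub hintf
  have hintgval : ∫ ε, (1 - f (1 - 2 * ε)) ∂w = 1 - φ₀ := by
    rw [integral_sub (integrable_const 1) hintf, hΦ]; simp
  -- ∑ aₙ γₙ ≤ 1 - φ₀ via partial sums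
  have hS : ∑' n, a n * γ n ≤ 1 - φ₀ := by
    refine Real.tsum_le_of_sum_range_le
      (fun n => mul_nonneg (hanneg n) (hγnonneg n)) fun N => ?_
    have : ∑ n ∈ Finset.range N, a n * γ n
        = ∫ ε, (∑ n ∈ Finset.range N, a n * (1 - 2 * ε) ^ (2 * (n + 1))) ∂w := by
      rw [integral_finset_sum]
      · simp_rw [integral_const_mul]; rfl
      · exact fun n _ => (hint n).const_mul _
    rw [this, ← hintgval]
    refine integral_mono_ae (by
      refine integrable_finset_sum _ fun n _ => (hint n).const_mul _) hintg ?_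
    filter_upwards [hbound] with ε hε
    have hsummable : Summable fun n => a n * (1 - 2 * ε) ^ (2 * (n + 1)) := by
      refine Summable.of_nonneg_of_le
        (fun n => mul_nonneg (hanneg n) (by rw [pow_mul]; exact pow_nonneg (sq_nonneg _) _))
        (fun n => mul_le_of_le_one_right (hanneg n) (pow_le_one₀ hε.1 hε.2)) hsum.summable
    have := Summable.sum_le_tsum (Finset.range N)
      (fun n _ => mul_nonneg (hanneg n) (by rw [pow_mul]; exact pow_nonneg (sq_nonneg _) _))
      hsummable
    rw [hf (1 - 2 * ε)]
    linarith
  -- Jensen: γ₀ ^ (n+1) ≤ γₙ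
  have hJ : ∀ n : ℕ, γ 0 ^ (n + 1) ≤ γ n := by
    intro n
    have hconv : ConvexOn ℝ (Set.Ici (0 : ℝ)) fun x : ℝ => x ^ (n + 1) :=
      convexOn_pow (n + 1)
    have hint0' : Integrable (fun ε => (1 - 2 * ε) ^ 2) w := by
      have := hint 0; simpa using this
    have key := hconv.map_integral_le (μ := w) (f := fun ε => (1 - 2 * ε) ^ 2)
      ((continuous_pow (n + 1)).continuousOn) isClosed_Ici
      (Filter.Eventually.of_forall fun ε => Set.mem_Ici.2 (sq_nonneg _)) hint0'
      (by
        have := hint n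
        refine this.congr ?_
        refine Filter.Eventually.of_forall fun ε => ?_
        simp [Function.comp, pow_mul])
    have h1 : γ 0 = ∫ ε, (1 - 2 * ε) ^ 2 ∂w := by
      simp [hγ]
    have h2 : γ n = ∫ ε, ((1 - 2 * ε) ^ 2) ^ (n + 1) ∂w := by
      simp_rw [hγ, pow_mul]
    rw [h1, h2]
    exact le_trans key (by
      refine le_of_eq (integral_congr_ae ?_)
      exact Filter.Eventually.of_forall fun ε => by simp [Function.comp])
  -- γ₀ ≤ y²
  have hy2 : (0:ℝ) ≤ y ^ 2 := sq_nonneg y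
  have hfy' : ∑' n, a n * (y ^ 2) ^ (n + 1) = 1 - φ₀ := by
    have := hf y
    rw [hfy] at this
    simp_rw [← pow_mul]
    linarith [this]
  have hγ0y : γ 0 ≤ y ^ 2 := by
    by_contra hlt
    push_neg at hlt
    have hsummJ : Summable fun n => a n * γ 0 ^ (n + 1) :=
      Summable.of_nonneg_of_le
        (fun n => mul_nonneg (hanneg n) (pow_nonneg (hγnonneg 0) _))
        (fun n => mul_le_of_le_one_right (hanneg n) (pow_le_one₀ (hγnonneg 0) (hγle1 0)))
        hsum.summable
    have hlt' : ∑' n, a n * (y ^ 2) ^ (n + 1) < ∑' n, a n * γ 0 ^ (n + 1) := by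
      refine Summable.tsum_lt_tsum_of_nonneg (i := 0)
        (fun n => mul_nonneg (hanneg n) (pow_nonneg hy2 _))
        (fun n => mul_le_mul_of_nonneg_left (pow_le_pow_left₀ hy2 hlt.le _) (hanneg n))
        ?_ hsummJ
      have : (y ^ 2) ^ (0 + 1) < γ 0 ^ (0 + 1) := by simpa using hlt
      exact mul_lt_mul_of_pos_left this (ha 0)
    have hle' : ∑' n, a n * γ 0 ^ (n + 1) ≤ ∑' n, a n * γ n :=
      Summable.tsum_le_tsum (fun n => mul_le_mul_of_nonneg_left (hJ n) (hanneg n)) hsummJ hsummγ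
    rw [hfy'] at hlt'
    linarith
  -- each γₙ ∈ [0, y²]
  have hγmem : ∀ n, γ n ∈ Set.Icc (0:ℝ) (y ^ 2) :=
    fun n => ⟨hγnonneg n, (hγle0 n).trans hγ0y⟩
  have hρnonneg : ∀ n, 0 ≤ ρ.eval (γ n) := by
    intro n
    have := hmono (Set.left_mem_Icc.2 hy2) (hγmem n) (hγnonneg n)
    simpa [hρ0] using this
  have hρle : ∀ n, ρ.eval (γ n) ≤ ρ.eval (y ^ 2) :=
    fun n => hmono (hγmem n) (Set.right_mem_Icc.2 hy2) (hγmem n).2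
  have hρy2 : (0:ℝ) ≤ ρ.eval (y ^ 2) := (hρnonneg 0).trans (hρle 0)
  have hsummρ : Summable fun n => a n * ρ.eval (γ n) :=
    Summable.of_nonneg_of_le (fun n => mul_nonneg (hanneg n) (hρnonneg n))
      (fun n => mul_le_mul_of_nonneg_left (hρle n) (hanneg n))
      (hsum.summable.mul_right _)
  have hfinal : ∑' n, a n * ρ.eval (γ n) ≤ ρ.eval (y ^ 2) := by
    calc ∑' n, a n * ρ.eval (γ n) ≤ ∑' n, a n * ρ.eval (y ^ 2) :=
          Summable.tsum_le_tsum (fun n => mul_le_mul_of_nonneg_left (hρle n) (hanneg n))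
            hsummρ (hsum.summable.mul_right _)
      _ = ρ.eval (y ^ 2) := by
          rw [tsum_mul_right, hsum.tsum_eq, one_mul]
  exact sub_le_sub_left hfinal _
end

section
/- Let a_n ≥ 0, Σ a_n = 1, let ρ be a polynomial with ρ(0)=0 that is nondecreasing on [0, 1-2ε₀], and let w be a probability measure on [0,1/2] with ∫ ε dw(ε) = ε₀. Then ρ(1) - Σ_n a_n ρ(1-2ε₀) ≤ ρ(1) - Σ_n a_n ρ(γ_n(w)) ≤ ρ(1) - Σ_n a_n ρ((1-2ε₀)^{2n}), where γ_n(w) = ∫(1-2ε)^{2n} dw(ε). -/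
open MeasureTheory

/-- Proposition 2: among channels with fixed error probability `ε₀`, the BEC(2ε₀)
minimizes and the BSC(ε₀) maximizes `Φ(ρ(a)) = ρ(1) - ∑ aₙ ρ(γₙ)`, when `ρ(0)=0`
and `ρ` is nondecreasing on `[0, 1-2ε₀]`. -/
theorem bec_min_bsc_max_fixed_error
    (a : ℕ → ℝ) (ha : ∀ n, 0 ≤ a n) (hsum : HasSum a 1)
    (ρ : Polynomial ℝ) (hρ0 : ρ.eval 0 = 0)
    (ε₀ : ℝ)
    (hmono : MonotoneOn ρ.eval (Set.Icc (0 : ℝ) (1 - 2 * ε₀)))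
    (w : Measure ℝ) [IsProbabilityMeasure w]
    (hw : ∀ᵐ ε ∂w, ε ∈ Set.Icc (0 : ℝ) (1 / 2))
    (hE : ∫ ε, ε ∂w = ε₀) :
    ρ.eval 1 - ∑' n : ℕ, a n * ρ.eval (1 - 2 * ε₀)
        ≤ ρ.eval 1 - ∑' n : ℕ, a n * ρ.eval (∫ ε, (1 - 2 * ε) ^ (2 * (n + 1)) ∂w) ∧
      ρ.eval 1 - ∑' n : ℕ, a n * ρ.eval (∫ ε, (1 - 2 * ε) ^ (2 * (n + 1)) ∂w)
        ≤ ρ.eval 1 - ∑' n : ℕ, a n * ρ.eval ((1 - 2 * ε₀) ^ (2 * (n + 1))) := by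
  have hwid : Integrable (fun ε : ℝ => ε) w := by
    refine Integrable.mono' (integrable_const (1/2 : ℝ)) measurable_id.aestronglyMeasurable ?_
    filter_upwards [hw] with ε hε
    rw [Real.norm_eq_abs, abs_le]
    exact ⟨by linarith [hε.1], hε.2⟩
  have hε0 : 0 ≤ ε₀ := by
    rw [← hE]; exact integral_nonneg_of_ae (hw.mono fun ε hε => hε.1)
  have hε1 : ε₀ ≤ 1/2 := by
    rw [← hE]
    calc ∫ ε, ε ∂w ≤ ∫ _, (1/2:ℝ) ∂w :=
          integral_mono_ae hwid (integrable_const _) (hw.mono fun ε hε => hε.2)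
      _ = 1/2 := by simp
  have hx0 : (0:ℝ) ≤ 1 - 2*ε₀ := by linarith
  have hx1 : (1:ℝ) - 2*ε₀ ≤ 1 := by linarith
  have hlin : Integrable (fun ε : ℝ => 1 - 2*ε) w :=
    (integrable_const (1:ℝ)).sub (hwid.const_mul 2)
  have hint1 : ∫ ε, (1 - 2*ε) ∂w = 1 - 2*ε₀ := by
    rw [integral_sub (integrable_const 1) (hwid.const_mul 2), integral_const_mul, hE]
    simp
  have hfm : ∀ n : ℕ, Integrable (fun ε : ℝ => (1 - 2*ε) ^ (2*(n+1))) w := by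
    intro n
    refine Integrable.mono' (integrable_const (1:ℝ))
      (((measurable_const.sub (measurable_id.const_mul 2)).pow_const _).aestronglyMeasurable) ?_
    filter_upwards [hw] with ε hε
    rw [Real.norm_eq_abs, abs_pow]
    calc |1 - 2*ε| ^ (2*(n+1)) ≤ 1^(2*(n+1)) :=
          pow_le_pow_left₀ (abs_nonneg _) (abs_le.2 ⟨by linarith [hε.2], by linarith [hε.1]⟩) _
      _ = 1 := one_pow _
  set γ : ℕ → ℝ := fun n => ∫ ε, (1 - 2*ε) ^ (2*(n+1)) ∂w with hγ
  have hγle : ∀ n, γ n ≤ 1 - 2*ε₀ := by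
    intro n
    rw [← hint1]
    refine integral_mono_ae (hfm n) hlin ?_
    filter_upwards [hw] with ε hε
    exact pow_le_of_le_one (by linarith [hε.2]) (by linarith [hε.1]) (by omega)
  have hγge : ∀ n, (1 - 2*ε₀)^(2*(n+1)) ≤ γ n := by
    intro n
    have hconv : ConvexOn ℝ Set.univ (fun x : ℝ => x ^ (2*(n+1))) :=
      Even.convexOn_pow (even_two_mul _)
    have h := hconv.map_integral_le (μ := w) (f := fun ε => 1 - 2*ε)
      (continuous_pow _).continuousOn isClosed_univ
      (Filter.Eventually.of_forall fun _ => trivial) hlin ?_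
    · simpa [hint1, Function.comp] using h
    · exact hfm n
  have hρnn : ∀ x, x ∈ Set.Icc (0:ℝ) (1 - 2*ε₀) → 0 ≤ ρ.eval x := by
    intro x hx
    have := hmono (Set.left_mem_Icc.2 hx0) hx hx.1
    simpa [hρ0] using this
  have hmem_pow : ∀ n, (1 - 2*ε₀)^(2*(n+1)) ∈ Set.Icc (0:ℝ) (1 - 2*ε₀) := fun n =>
    ⟨pow_nonneg hx0 _, pow_le_of_le_one hx0 hx1 (by omega)⟩
  have hmem_γ : ∀ n, γ n ∈ Set.Icc (0:ℝ) (1 - 2*ε₀) := fun n =>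
    ⟨le_trans (hmem_pow n).1 (hγge n), hγle n⟩
  have hmem_x0 : (1 - 2*ε₀) ∈ Set.Icc (0:ℝ) (1 - 2*ε₀) := Set.right_mem_Icc.2 hx0
  -- summability
  have hsummableC : Summable (fun n => a n * ρ.eval (1 - 2*ε₀)) :=
    hsum.summable.mul_right _
  have haux : ∀ (b : ℕ → ℝ), (∀ n, b n ∈ Set.Icc (0:ℝ) (1 - 2*ε₀)) →
      Summable (fun n => a n * ρ.eval (b n)) := by
    intro b hb
    refine Summable.of_nonneg_of_le (fun n => mul_nonneg (ha n) (hρnn _ (hb n)))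
      (fun n => mul_le_mul_of_nonneg_left (hmono (hb n) hmem_x0 (hb n).2) (ha n)) hsummableC
  have hsγ : Summable (fun n => a n * ρ.eval (γ n)) := haux _ hmem_γ
  have hspow : Summable (fun n => a n * ρ.eval ((1 - 2*ε₀)^(2*(n+1)))) := haux _ hmem_pow
  constructor
  · apply sub_le_sub_left
    refine Summable.tsum_le_tsum (fun n => ?_) hsγ hsummableC
    exact mul_le_mul_of_nonneg_left (hmono (hmem_γ n) hmem_x0 (hγle n)) (ha n)
  · apply sub_le_sub_left
    refine Summable.tsum_le_tsum (fun n => ?_) hspow hsγ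
    exact mul_le_mul_of_nonneg_left (hmono (hmem_pow n) (hmem_γ n) (hγge n)) (ha n)
end

section
/- Let a_n ≥ 0 with Σ a_n = 1, and let w_a, w_b be probability measures on [0,1/2] with moments γ_n(w) = ∫(1-2ε)^{2n} dw(ε). Define 1-Φ(a) = Σ a_n γ_n(w_a), 1-Φ(b) = Σ a_n γ_n(w_b), and 1-Φ(a⊠b) = Σ a_n γ_n(w_a)γ_n(w_b). Then 1-Φ(a⊠b) ≥ (1-Φ(a))(1-Φ(b)). -/
open MeasureTheory

/-- The moment integrand is integrable. -/
lemma moment_integrable (μ : Measure ℝ) [IsProbabilityMeasure μ]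
    (hμ : ∀ᵐ ε ∂μ, ε ∈ Set.Icc (0 : ℝ) (1 / 2)) (n : ℕ) :
    Integrable (fun ε : ℝ => (1 - 2 * ε) ^ (2 * (n + 1))) μ := by
  refine (integrable_const (1 : ℝ)).mono' ?_ ?_
  · exact (Continuous.pow (by continuity) _).aestronglyMeasurable
  · filter_upwards [hμ] with ε hε
    rw [Real.norm_eq_abs, abs_pow]
    refine pow_le_one₀ (abs_nonneg _) ?_
    rw [abs_le]
    constructor
    · linarith [hε.2]
    · linarith [hε.1]

lemma moment_nonneg (μ : Measure ℝ) (n : ℕ) :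
    0 ≤ ∫ ε, (1 - 2 * ε) ^ (2 * (n + 1)) ∂μ := by
  refine integral_nonneg fun ε => ?_
  rw [pow_mul]
  positivity

lemma moment_le_one (μ : Measure ℝ) [IsProbabilityMeasure μ]
    (hμ : ∀ᵐ ε ∂μ, ε ∈ Set.Icc (0 : ℝ) (1 / 2)) (n : ℕ) :
    ∫ ε, (1 - 2 * ε) ^ (2 * (n + 1)) ∂μ ≤ 1 := by
  calc ∫ ε, (1 - 2 * ε) ^ (2 * (n + 1)) ∂μ ≤ ∫ _, (1 : ℝ) ∂μ := by
        refine integral_mono_ae (moment_integrable μ hμ n) (integrable_const 1) ?_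
        filter_upwards [hμ] with ε hε
        exact pow_le_one₀ (by linarith [hε.2]) (by linarith [hε.1])
    _ = 1 := by simp

lemma moment_antitone (μ : Measure ℝ) [IsProbabilityMeasure μ]
    (hμ : ∀ᵐ ε ∂μ, ε ∈ Set.Icc (0 : ℝ) (1 / 2)) {n m : ℕ} (hnm : n ≤ m) :
    ∫ ε, (1 - 2 * ε) ^ (2 * (m + 1)) ∂μ ≤ ∫ ε, (1 - 2 * ε) ^ (2 * (n + 1)) ∂μ := by
  refine integral_mono_ae (moment_integrable μ hμ m) (moment_integrable μ hμ n) ?_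
  filter_upwards [hμ] with ε hε
  exact pow_le_pow_of_le_one (by linarith [hε.2]) (by linarith [hε.1]) (by omega)

/-- Weighted Chebyshev sum inequality for comonotone bounded sequences. -/
lemma chebyshev_tsum (a f g : ℕ → ℝ) (ha : ∀ n, 0 ≤ a n) (hsum : HasSum a 1)
    (hf0 : ∀ n, 0 ≤ f n) (hf1 : ∀ n, f n ≤ 1)
    (hg0 : ∀ n, 0 ≤ g n) (hg1 : ∀ n, g n ≤ 1)
    (hfg : ∀ n m, 0 ≤ (f n - f m) * (g n - g m)) :
    (∑' n, a n * f n) * (∑' n, a n * g n) ≤ ∑' n, a n * (f n * g n) := by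
  have sa : Summable a := hsum.summable
  have sf : Summable (fun n => a n * f n) :=
    Summable.of_nonneg_of_le (fun n => mul_nonneg (ha n) (hf0 n))
      (fun n => mul_le_of_le_one_right (ha n) (hf1 n)) sa
  have sg : Summable (fun n => a n * g n) :=
    Summable.of_nonneg_of_le (fun n => mul_nonneg (ha n) (hg0 n))
      (fun n => mul_le_of_le_one_right (ha n) (hg1 n)) sa
  have sfg : Summable (fun n => a n * (f n * g n)) :=
    Summable.of_nonneg_of_le
      (fun n => mul_nonneg (ha n) (mul_nonneg (hf0 n) (hg0 n)))
      (fun n => mul_le_of_le_one_right (ha n)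
        (mul_le_one₀ (hf1 n) (hg0 n) (hg1 n))) sa
  set F := ∑' n, a n * f n with hF
  set G := ∑' n, a n * g n with hG
  set S := ∑' n, a n * (f n * g n) with hS
  -- inner tsum computation
  have inner : ∀ n, ∑' m, a m * ((f n - f m) * (g n - g m))
      = f n * g n - G * f n - F * g n + S := by
    intro n
    have expand : (fun m => a m * ((f n - f m) * (g n - g m)))
        = fun m => a m * (f n * g n) - a m * g m * f n - a m * f m * g n
          + a m * (f m * g m) := by
      funext m; ring
    have s1 : Summable (fun m => a m * (f n * g n)) := sa.mul_right _
    have s2 : Summable (fun m => a m * g m * f n) := sg.mul_right _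
    have s3 : Summable (fun m => a m * f m * g n) := sf.mul_right _
    rw [expand, Summable.tsum_add ((s1.sub s2).sub s3) sfg, Summable.tsum_sub (s1.sub s2) s3,
      Summable.tsum_sub s1 s2]
    have e1 : ∑' m, a m * (f n * g n) = f n * g n := by
      rw [tsum_mul_right, hsum.tsum_eq, one_mul]
    have e2 : ∑' m, a m * g m * f n = G * f n := by
      rw [tsum_mul_right]
    have e3 : ∑' m, a m * f m * g n = F * g n := by
      rw [tsum_mul_right]
    rw [e1, e2, e3]
  have key : ∀ n, a n * (f n * g n) - (a n * f n) * G - (a n * g n) * F + a n * S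
      = a n * ∑' m, a m * ((f n - f m) * (g n - g m)) := by
    intro n
    rw [inner n]; ring
  have nonneg : ∀ n, 0 ≤ a n * ∑' m, a m * ((f n - f m) * (g n - g m)) := by
    intro n
    exact mul_nonneg (ha n) (tsum_nonneg fun m => mul_nonneg (ha m) (hfg n m))
  have t1 : Summable (fun n => (a n * f n) * G) := sf.mul_right _
  have t2 : Summable (fun n => (a n * g n) * F) := sg.mul_right _
  have t3 : Summable (fun n => a n * S) := sa.mul_right _
  have total : ∑' n, (a n * (f n * g n) - (a n * f n) * G - (a n * g n) * F + a n * S)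
      = S - F * G - G * F + S := by
    rw [Summable.tsum_add ((sfg.sub t1).sub t2) t3, Summable.tsum_sub (sfg.sub t1) t2, Summable.tsum_sub sfg t1]
    have e1 : ∑' n, (a n * f n) * G = F * G := by rw [tsum_mul_right]
    have e2 : ∑' n, (a n * g n) * F = G * F := by rw [tsum_mul_right]
    have e3 : ∑' n, a n * S = S := by rw [tsum_mul_right, hsum.tsum_eq, one_mul]
    rw [e1, e2, e3]
  have pos : 0 ≤ ∑' n, (a n * (f n * g n) - (a n * f n) * G - (a n * g n) * F
      + a n * S) := by
    refine tsum_nonneg fun n => ?_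
    rw [key n]
    exact nonneg n
  rw [total] at pos
  nlinarith [pos]

/-- Inequality (9): `1 - Φ(a ⊠ b) ≥ (1 - Φ(a))(1 - Φ(b))`, where for probability
measures `w_a`, `w_b` on `[0,1/2]` with moments `γₙ(w) = ∫ (1-2ε)^{2n} dw`, we set
`1 - Φ(a) = ∑ aₙ γₙ(w_a)`, `1 - Φ(b) = ∑ aₙ γₙ(w_b)` and
`1 - Φ(a ⊠ b) = ∑ aₙ γₙ(w_a) γₙ(w_b)`. -/
theorem check_convolution_multiplicative_bound
    (a : ℕ → ℝ) (ha : ∀ n, 0 ≤ a n) (hsum : HasSum a 1)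
    (wa wb : Measure ℝ) [IsProbabilityMeasure wa] [IsProbabilityMeasure wb]
    (hwa : ∀ᵐ ε ∂wa, ε ∈ Set.Icc (0 : ℝ) (1 / 2))
    (hwb : ∀ᵐ ε ∂wb, ε ∈ Set.Icc (0 : ℝ) (1 / 2)) :
    (∑' n : ℕ, a n * ∫ ε, (1 - 2 * ε) ^ (2 * (n + 1)) ∂wa) *
        (∑' n : ℕ, a n * ∫ ε, (1 - 2 * ε) ^ (2 * (n + 1)) ∂wb)
      ≤ ∑' n : ℕ, a n * ((∫ ε, (1 - 2 * ε) ^ (2 * (n + 1)) ∂wa) *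
          (∫ ε, (1 - 2 * ε) ^ (2 * (n + 1)) ∂wb)) := by
  refine chebyshev_tsum a
    (fun n => ∫ ε, (1 - 2 * ε) ^ (2 * (n + 1)) ∂wa)
    (fun n => ∫ ε, (1 - 2 * ε) ^ (2 * (n + 1)) ∂wb)
    ha hsum (fun n => moment_nonneg wa n) (fun n => moment_le_one wa hwa n)
    (fun n => moment_nonneg wb n) (fun n => moment_le_one wb hwb n)
    (fun n m => ?_)
  rcases le_total n m with h | h
  · exact mul_nonneg (sub_nonneg.2 (moment_antitone wa hwa h))
      (sub_nonneg.2 (moment_antitone wb hwb h))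
  · have h1 := moment_antitone wa hwa h
    have h2 := moment_antitone wb hwb h
    nlinarith
end
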